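/- arXiv:1602.04061 — 2 statements merged into one kernel-verified Lean document; each statement's English description precedes it below -/
import Mathlib

section
/- For every alphabet A, every configuration x : ℤ × ℤ → A and every letter a ∈ A, there exists a unique function y : ℤ × ℤ → A satisfying all three conditions: y(n+1, 2k) = x(n, k) for all n, k ∈ ℤ; y(n+1, 2k+1) = y(n, k) for all n, k ∈ ℤ; and y(n, −1) = a for all n ∈ ℤ. (That is, the dyadic encoding of x with filler a exists and is unique.) -/
/-!
The three rules are a recursion on the column: an even column `2m` of row `n + 1` reads
`x (n, m)`, an odd column `2m + 1` copies column `m` of the row above, and column `-1` holds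
the filler. Each odd step halves `k + 1`, so the recursion reaches column `-1` or an even
column; it defines a solution, and functional induction along it shows every solution agrees
with it.
-/

def IsDyadicEncoding {A : Type*} (x : ℤ × ℤ → A) (a : A) (y : ℤ × ℤ → A) : Prop :=
  (∀ n k : ℤ, y (n + 1, 2 * k) = x (n, k)) ∧
  (∀ n k : ℤ, y (n + 1, 2 * k + 1) = y (n, k)) ∧
  (∀ n : ℤ, y (n, -1) = a)

section

variable {A : Type*} (x : ℤ × ℤ → A) (a : A)

-- `k / 2` is floor division, so for odd `k = 2m + 1` it is `m`, negative `k` included.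
def dyadicEncoding : ℤ × ℤ → A
  | (n, k) =>
    if k = -1 then a
    else if k % 2 = 0 then x (n - 1, k / 2)
    else dyadicEncoding (n - 1, k / 2)
termination_by p => (p.2 + 1).natAbs
decreasing_by omega

theorem dyadicEncoding_neg_one (n : ℤ) : dyadicEncoding x a (n, -1) = a := by
  rw [dyadicEncoding, if_pos rfl]

theorem isDyadicEncoding_dyadicEncoding : IsDyadicEncoding x a (dyadicEncoding x a) := by
  refine ⟨fun n k => ?_, fun n k => ?_, dyadicEncoding_neg_one x a⟩
  · rw [dyadicEncoding, if_neg (by omega), if_pos (by omega)]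
    congr <;> omega
  · obtain rfl | hk := eq_or_ne k (-1)
    · norm_num [dyadicEncoding_neg_one]
    · rw [dyadicEncoding, if_neg (by omega), if_neg (by omega)]
      congr <;> omega

variable {x a}

theorem IsDyadicEncoding.eq_dyadicEncoding {y : ℤ × ℤ → A} (hy : IsDyadicEncoding x a y) :
    y = dyadicEncoding x a := by
  obtain ⟨hEven, hOdd, hFill⟩ := hy
  funext p
  induction p using dyadicEncoding.induct with
  | case1 n => rw [hFill, dyadicEncoding_neg_one]
  | case2 n k hk hk2 =>
    rw [dyadicEncoding, if_neg hk, if_pos hk2, ← hEven]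
    congr <;> omega
  | case3 n k hk hk2 ih =>
    rw [dyadicEncoding, if_neg hk, if_neg hk2, ← ih, ← hOdd (n - 1) (k / 2)]
    congr <;> omega

end

/-- The dyadic encoding of a configuration `x` with filler letter `a` exists and
is unique: there is a unique `y : ℤ × ℤ → A` with `y(n+1, 2k) = x(n, k)`,
`y(n+1, 2k+1) = y(n, k)` and `y(n, -1) = a`. -/
theorem dyadicEncoding_existsUnique {A : Type*} (x : ℤ × ℤ → A) (a : A) :
    ∃! y : ℤ × ℤ → A,
      (∀ n k : ℤ, y (n + 1, 2 * k) = x (n, k)) ∧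
      (∀ n k : ℤ, y (n + 1, 2 * k + 1) = y (n, k)) ∧
      (∀ n : ℤ, y (n, -1) = a) :=
  ⟨dyadicEncoding x a, isDyadicEncoding_dyadicEncoding x a,
    fun _ hy => IsDyadicEncoding.eq_dyadicEncoding hy⟩
end

section
/- Let A be a finite alphabet and Σ ⊆ A^{ℤ×ℤ} an effective set of colourings. Define the dyadic encoding Φ(Σ) ⊆ (A × A)^{ℤ×ℤ} as the set of configurations z : ℤ × ℤ → A × A such that (i) the first-component configuration π₁ ∘ z belongs to Σ, and (ii) the second component satisfies π₂(z(n+1, 2k)) = π₁(z(n, k)) and π₂(z(n+1, 2k+1)) = π₂(z(n, k)) for all n, k ∈ ℤ. Then Φ(Σ) is an effective set of colourings over the alphabet A × A. -/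
/-- The support of size `n`: `𝕌_n = {(p,q) : p ≤ n-1, q ≤ 2^p - 1}` (natural subtraction). -/
def U (n : ℕ) : Set (ℕ × ℕ) := {pq | pq.1 ≤ n - 1 ∧ pq.2 ≤ 2 ^ pq.1 - 1}

instance (n : ℕ) : DecidablePred (· ∈ U n) := fun pq =>
  inferInstanceAs (Decidable (pq.1 ≤ n - 1 ∧ pq.2 ≤ 2 ^ pq.1 - 1))

instance (n : ℕ) : Fintype (U n) :=
  Fintype.ofFinset ((Finset.range (n + 1) ×ˢ Finset.range (2 ^ (n + 1))).filter (· ∈ U n))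
    (by
      intro pq
      simp only [Finset.mem_filter, Finset.mem_product, Finset.mem_range]
      constructor
      · exact fun h => h.2
      · intro h
        obtain ⟨h1, h2⟩ := h
        refine ⟨⟨by omega, ?_⟩, ⟨h1, h2⟩⟩
        have hp : 2 ^ pq.1 ≤ 2 ^ (n + 1) := Nat.pow_le_pow_right (by norm_num) (by omega)
        have : 0 < 2 ^ pq.1 := Nat.pow_pos (by norm_num)
        omega)

/-- A pattern over alphabet `A`: a size `n+1 ≥ 1` together with a colouring of `𝕌_{n+1}`. -/
def Pattern (A : Type) : Type := Σ n : ℕ, (U (n + 1) → A)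

/-- The size of a pattern (always ≥ 1). -/
def Pattern.size {A : Type} (P : Pattern A) : ℕ := P.1 + 1

instance {A : Type} [Encodable A] (n : ℕ) : Encodable (↥(U n) → A) :=
  Encodable.fintypeArrowOfEncodable

instance {A : Type} [Encodable A] : Encodable (Pattern A) :=
  inferInstanceAs (Encodable (Σ n : ℕ, (U (n + 1) → A)))

/-- `P` (with support `𝕌_n`) appears in the configuration `x` at position `(n₀, k₀)`. -/
def AppearsAt {A : Type} {n : ℕ} (P : U n → A) (x : ℤ × ℤ → A) (g : ℤ × ℤ) : Prop :=
  ∀ pq : U n, x (g.1 + (pq.1.1 : ℤ), 2 ^ pq.1.1 * g.2 + (pq.1.2 : ℤ)) = P pq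

/-- The pattern `P` appears somewhere in the configuration `x`. -/
def Pattern.Appears {A : Type} (P : Pattern A) (x : ℤ × ℤ → A) : Prop :=
  ∃ g : ℤ × ℤ, AppearsAt P.2 x g

/-- The set of colourings avoiding every pattern of `F`. -/
def colourings {A : Type} (F : Set (Pattern A)) : Set ((ℤ × ℤ) → A) :=
  {x | ∀ P ∈ F, ¬ P.Appears x}

/-- A set of colourings is of finite type (CFT). -/
def IsCFT {A : Type} (S : Set ((ℤ × ℤ) → A)) : Prop :=
  ∃ F : Set (Pattern A), F.Finite ∧ S = colourings F

/-- A set of colourings is sofic: letter-to-letter projection of a CFT. -/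
def IsSofic {A : Type} (S : Set ((ℤ × ℤ) → A)) : Prop :=
  ∃ (B : Type) (_ : Fintype B) (S' : Set ((ℤ × ℤ) → B)) (φ : B → A),
    IsCFT S' ∧ S = (fun w => φ ∘ w) '' S'

/-- A set of colourings is effective: defined by a set of forbidden patterns whose
set of codes (under the standard encoding of patterns) is recursively enumerable. -/
def IsEffective {A : Type} [Encodable A] (S : Set ((ℤ × ℤ) → A)) : Prop :=
  ∃ F : Set (Pattern A),
    REPred (fun c : ℕ => ∃ P ∈ F, Encodable.encode P = c) ∧ S = colourings F

/-- The dyadic encoding of a set of colourings `S`: configurations over `A × A` whose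
first component lies in `S` and whose second component is the dyadic encoding of the
first one, i.e. `π₂(z(n+1, 2k)) = π₁(z(n, k))` and `π₂(z(n+1, 2k+1)) = π₂(z(n, k))`. -/
def DyadicImage {A : Type} (S : Set ((ℤ × ℤ) → A)) : Set ((ℤ × ℤ) → A × A) :=
  {z | (fun g => (z g).1) ∈ S ∧
    ∀ n k : ℤ, (z (n + 1, 2 * k)).2 = (z (n, k)).1 ∧ (z (n + 1, 2 * k + 1)).2 = (z (n, k)).2}

/-!
A configuration `z` over `A × A` lies in the dyadic image of `Σ_F` exactly when its first
component avoids `F` and every size-2 window of `z` satisfies the two local equations. Hence the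
dyadic image is `Σ_F'`, where `F'` consists of the finitely many size-2 patterns violating the
equations together with all patterns whose first-component projection lies in `F`. To see that
`F'` is recursively enumerable, read the code of a pattern as the code of its size and of the list
of (position, letter code) pairs: on such lists, recognising the codes of patterns and projecting
to the first component are primitive recursive.
-/

open Encodable

section Computability

variable {α β : Type*} [Primcodable α] [Primcodable β]

theorem REPred.comp {p : β → Prop} (hp : REPred p) {f : α → β} (hf : Computable f) :
    REPred fun a => p (f a) :=
  Partrec.comp hp hf

theorem ComputablePred.rePred_or {p q : α → Prop} (hp : ComputablePred p) (hq : REPred q) :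
    REPred fun a => p a ∨ q a := by
  obtain ⟨_, hp⟩ := hp
  refine (Partrec.cond hp (Computable.const ()) hq).dom_re.of_eq fun a => ?_
  by_cases h : p a <;> simp [h, Part.assert]

theorem ComputablePred.rePred_and {p q : α → Prop} (hp : ComputablePred p) (hq : REPred q) :
    REPred fun a => p a ∧ q a := by
  obtain ⟨_, hp⟩ := hp
  refine (Partrec.cond hp hq Partrec.none).dom_re.of_eq fun a => ?_
  by_cases h : p a <;> simp [h, Part.assert]

theorem Set.Finite.primrecPred_mem {s : Set α} (hs : s.Finite) : PrimrecPred (· ∈ s) := by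
  obtain ⟨t, ht⟩ := (hs.image encode).exists_finset_coe
  have h : PrimrecPred fun a : α => ∃ n ∈ t.toList, n = encode a :=
    Primrec.eq.exists_mem_list.comp (Primrec.const _) Primrec.encode
  refine h.of_eq fun a => ?_
  simp [← Finset.mem_coe, ht, encode_injective.eq_iff]

theorem rePred_exists_mem_encode_eq {s : Set α} (hs : REPred (· ∈ s)) :
    REPred fun c : ℕ => ∃ a ∈ s, encode a = c := by
  have h := Partrec.bind (Computable.ofOption Primrec.decode₂.to_comp)
    (Partrec.comp hs Computable.snd).to₂
  refine h.dom_re.of_eq fun c => ?_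
  rw [Part.dom_iff_mem]
  simp [decode₂_eq_some, and_comm]

end Computability

section Colourings

variable {X Y : Type}

def window (x : ℤ × ℤ → X) (n : ℕ) (g : ℤ × ℤ) : U n → X :=
  fun pq => x (g.1 + pq.1.1, 2 ^ pq.1.1 * g.2 + pq.1.2)

theorem Pattern.appears_iff {P : Pattern X} {x : ℤ × ℤ → X} :
    P.Appears x ↔ ∃ g, window x (P.1 + 1) g = P.2 := by
  simp only [Pattern.Appears, AppearsAt, funext_iff, window]

theorem colourings_union (F G : Set (Pattern X)) :
    colourings (F ∪ G) = colourings F ∩ colourings G := by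
  ext x
  simp only [colourings, Set.mem_union, Set.mem_inter_iff, Set.mem_ofPred_eq, or_imp, forall_and]

def Pattern.fst (Q : Pattern (X × Y)) : Pattern X := ⟨Q.1, fun u => (Q.2 u).1⟩

theorem exists_fst_eq_and_appears_iff {P : Pattern X} {z : ℤ × ℤ → X × Y} :
    (∃ Q : Pattern (X × Y), Q.fst = P ∧ Q.Appears z) ↔ P.Appears fun g => (z g).1 := by
  constructor
  · rintro ⟨Q, rfl, g, hg⟩
    exact ⟨g, fun u => congrArg Prod.fst (hg u)⟩
  · rintro ⟨g, hg⟩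
    refine ⟨⟨P.1, window z (P.1 + 1) g⟩, ?_, g, fun u => rfl⟩
    exact Sigma.ext rfl (heq_of_eq (funext hg))

theorem colourings_preimage_fst (F : Set (Pattern X)) :
    colourings (Pattern.fst ⁻¹' F : Set (Pattern (X × Y))) =
      {z | (fun g => (z g).1) ∈ colourings F} := by
  ext z
  simp only [colourings, Set.mem_preimage, Set.mem_ofPred_eq, ← exists_fst_eq_and_appears_iff]
  grind

end Colourings

section DyadicRule

def U.root : U 2 := ⟨(0, 0), by decide⟩
def U.left : U 2 := ⟨(1, 0), by decide⟩
def U.right : U 2 := ⟨(1, 1), by decide⟩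

variable {A : Type}

def IsDyadicTile (f : U 2 → A × A) : Prop :=
  (f U.left).2 = (f U.root).1 ∧ (f U.right).2 = (f U.root).2

theorem isDyadicTile_window_iff (z : ℤ × ℤ → A × A) (n k : ℤ) :
    IsDyadicTile (window z 2 (n, k)) ↔
      (z (n + 1, 2 * k)).2 = (z (n, k)).1 ∧ (z (n + 1, 2 * k + 1)).2 = (z (n, k)).2 := by
  simp [IsDyadicTile, window, U.root, U.left, U.right]

theorem colourings_image_not_isDyadicTile :
    colourings (Sigma.mk 1 '' {f : U 2 → A × A | ¬ IsDyadicTile f}) =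
      {z | ∀ g, IsDyadicTile (window z 2 g)} := by
  ext z
  simp only [colourings, Set.mem_ofPred_eq, Pattern.appears_iff]
  constructor
  · intro h g
    by_contra hg
    exact h _ ⟨_, hg, rfl⟩ ⟨g, rfl⟩
  · rintro h _ ⟨f, hf, rfl⟩ ⟨g, rfl : window z 2 g = f⟩
    exact hf (h g)

def dyadicLift (F : Set (Pattern A)) : Set (Pattern (A × A)) :=
  Sigma.mk 1 '' {f | ¬ IsDyadicTile f} ∪ Pattern.fst ⁻¹' F

theorem colourings_dyadicLift (F : Set (Pattern A)) :
    colourings (dyadicLift F) = DyadicImage (colourings F) := by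
  ext z
  simp only [dyadicLift, colourings_union, colourings_image_not_isDyadicTile,
    colourings_preimage_fst, DyadicImage, Set.mem_inter_iff, Set.mem_ofPred_eq, Prod.forall,
    isDyadicTile_window_iff]
  exact and_comm

end DyadicRule

theorem Encodable.encode_list_map {α β : Type*} [Encodable α] [Encodable β] {f : α → β}
    (hf : ∀ a, encode (f a) = encode a) (l : List α) : encode (l.map f) = encode l := by
  induction l with
  | nil => rfl
  | cons a l ih => simp [encode_list_cons, hf, ih]

section RawCode

variable {X : Type} [Encodable X]

def U.equivSigma (n : ℕ) : U (n + 1) ≃ Σ p : Fin (n + 1), Fin (2 ^ (p : ℕ)) where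
  toFun u := ⟨⟨u.1.1, by have := u.2.1; omega⟩,
    ⟨u.1.2, show u.1.2 < 2 ^ u.1.1 by
      have := u.2.2
      have := Nat.one_le_two_pow (n := u.1.1)
      omega⟩⟩
  invFun s := ⟨(s.1, s.2), by have := s.1.2; have := s.2.2; constructor <;> dsimp <;> omega⟩
  left_inv _ := rfl
  right_inv _ := rfl

theorem U.card_succ (n : ℕ) : Fintype.card (U (n + 1)) = 2 ^ (n + 1) - 1 := by
  rw [Fintype.card_congr (U.equivSigma n), Fintype.card_sigma]
  simp only [Fintype.card_fin]
  rw [Fin.sum_univ_eq_sum_range (2 ^ ·), Nat.geomSum_eq le_rfl, Nat.div_one]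

def Pattern.toRaw (P : Pattern X) : ℕ × List (ℕ × ℕ) :=
  (P.1, List.ofFn fun i => ((i : ℕ), encode (P.2 (fintypeEquivFin.symm i))))

theorem Pattern.encode_toRaw (P : Pattern X) : encode P.toRaw = encode P := by
  obtain ⟨n, f⟩ := P
  change Nat.pair n _ = Nat.pair n (encode (List.Vector.ofFn fun i =>
    (⟨i, f (fintypeEquivFin.symm i)⟩ : Σ _ : Fin (Fintype.card (U (n + 1))), X)).toList)
  rw [List.Vector.toList_ofFn,
    ← encode_list_map (f := fun s : Σ _ : Fin _, X => ((s.1 : ℕ), encode s.2)) fun _ => rfl,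
    List.map_ofFn]
  rfl

theorem Pattern.toRaw_injective : Function.Injective (Pattern.toRaw (X := X)) :=
  fun P Q h => encode_injective (by rw [← P.encode_toRaw, ← Q.encode_toRaw, h])

def IsRawPattern (X : Type) [Encodable X] (r : ℕ × List (ℕ × ℕ)) : Prop :=
  r.2.map Prod.fst = List.range (2 ^ (r.1 + 1) - 1) ∧
    ∀ x ∈ r.2, x.2 ∈ Set.range (encode : X → ℕ)

theorem Pattern.range_toRaw : Set.range (Pattern.toRaw (X := X)) = {r | IsRawPattern X r} := by
  ext ⟨n, l⟩
  constructor
  · rintro ⟨⟨n, f⟩, h⟩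
    cases h
    refine ⟨?_, ?_⟩
    · refine List.ext_getElem ?_ fun i _ _ => by simp
      simp only [List.length_map, List.length_ofFn, List.length_range, U.card_succ]
    · simp
  · rintro ⟨hfst, hsnd⟩
    dsimp only at hfst hsnd
    have hlen : l.length = Fintype.card (U (n + 1)) := by
      rw [U.card_succ, ← List.length_range (n := 2 ^ (n + 1) - 1), ← hfst, List.length_map]
    have hidx : ∀ i (hi : i < l.length), l[i].1 = i := fun i hi => by
      have h := List.getElem_of_eq hfst (by simpa using hi)
      rwa [List.getElem_map, List.getElem_range] at h
    choose a ha using hsnd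
    refine ⟨⟨n, fun u => a l[fintypeEquivFin u] (List.getElem_mem _)⟩, ?_⟩
    refine Prod.ext rfl (List.ext_getElem (by simp [Pattern.toRaw, hlen]) fun i _ _ => ?_)
    simp only [Pattern.toRaw, List.getElem_ofFn, Equiv.apply_symm_apply, ha]
    exact Prod.ext (hidx i _).symm rfl

theorem primrecPred_isRawPattern [Finite X] : PrimrecPred (IsRawPattern X) := by
  have hpow : Primrec fun n : ℕ => 2 ^ (n + 1) - 1 :=
    Primrec.nat_sub.comp ((Primrec₂.unpaired'.1 Nat.Primrec.pow).comp (Primrec.const 2)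
      Primrec.succ) (Primrec.const 1)
  have hshape : PrimrecPred fun r : ℕ × List (ℕ × ℕ) =>
      r.2.map Prod.fst = List.range (2 ^ (r.1 + 1) - 1) :=
    Primrec.eq.comp (Primrec.list_map Primrec.snd (Primrec.fst.comp Primrec.snd).to₂)
      (Primrec.list_range.comp (hpow.comp Primrec.fst))
  have hletters : PrimrecPred fun r : ℕ × List (ℕ × ℕ) =>
      ∀ x ∈ r.2, x.2 ∈ Set.range (encode : X → ℕ) :=
    (((Set.finite_range _).primrecPred_mem.comp Primrec.snd).forall_mem_list).comp Primrec.snd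
  exact hshape.and hletters

def rawFst (r : ℕ × List (ℕ × ℕ)) : ℕ × List (ℕ × ℕ) :=
  (r.1, r.2.map fun x => (x.1, x.2.unpair.1))

theorem primrec_rawFst : Primrec rawFst :=
  Primrec.pair Primrec.fst (Primrec.list_map Primrec.snd (Primrec.pair (Primrec.fst.comp
    Primrec.snd) (Primrec.fst.comp (Primrec.unpair.comp (Primrec.snd.comp Primrec.snd)))).to₂)

theorem Pattern.toRaw_fst {Y : Type} [Encodable Y] (Q : Pattern (X × Y)) :
    Q.fst.toRaw = rawFst Q.toRaw := by
  obtain ⟨n, f⟩ := Q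
  refine Prod.ext rfl ?_
  simp only [Pattern.toRaw, Pattern.fst, rawFst, List.map_ofFn, Function.comp_def]
  refine congrArg List.ofFn (funext fun i => ?_)
  rw [encode_prod_val, Nat.unpair_pair]
  rfl

theorem Pattern.rePred_exists_mem_encode_eq_iff {F : Set (Pattern X)} :
    REPred (fun c : ℕ => ∃ P ∈ F, encode P = c) ↔ REPred (· ∈ Pattern.toRaw '' F) := by
  constructor
  · refine fun h => (h.comp Computable.encode).of_eq fun r => ⟨?_, ?_⟩
    · rintro ⟨P, hP, he⟩
      exact ⟨P, hP, encode_injective (by rw [P.encode_toRaw, he])⟩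
    · rintro ⟨P, hP, rfl⟩
      exact ⟨P, hP, P.encode_toRaw.symm⟩
  · refine fun h => (rePred_exists_mem_encode_eq h).of_eq fun c => ⟨?_, ?_⟩
    · rintro ⟨_, ⟨P, hP, rfl⟩, he⟩
      exact ⟨P, hP, P.encode_toRaw ▸ he⟩
    · rintro ⟨P, hP, rfl⟩
      exact ⟨_, ⟨P, hP, rfl⟩, P.encode_toRaw⟩

end RawCode

theorem image_toRaw_dyadicLift {A : Type} [Encodable A] (F : Set (Pattern A)) :
    Pattern.toRaw '' dyadicLift F =
      Pattern.toRaw '' (Sigma.mk 1 '' {f : U 2 → A × A | ¬ IsDyadicTile f}) ∪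
        {r | IsRawPattern (A × A) r ∧ rawFst r ∈ Pattern.toRaw '' F} := by
  rw [dyadicLift, Set.image_union]
  congr 1
  ext r
  constructor
  · rintro ⟨Q, hQ, rfl⟩
    refine ⟨(Pattern.range_toRaw (X := A × A)).subset ⟨Q, rfl⟩, ?_⟩
    rw [← Pattern.toRaw_fst]
    exact ⟨_, hQ, rfl⟩
  · rintro ⟨hr, hF⟩
    obtain ⟨Q, rfl⟩ : r ∈ Set.range (Pattern.toRaw (X := A × A)) :=
      (Pattern.range_toRaw (X := A × A)).superset hr
    rw [← Pattern.toRaw_fst, Pattern.toRaw_injective.mem_set_image] at hF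
    exact ⟨Q, hF, rfl⟩

theorem dyadicImage_isEffective_general {A : Type} [Fintype A] [Encodable A]
    (S : Set ((ℤ × ℤ) → A)) (hS : IsEffective S) :
    IsEffective (DyadicImage S) := by
  obtain ⟨F, hF, rfl⟩ := hS
  refine ⟨dyadicLift F, ?_, (colourings_dyadicLift F).symm⟩
  rw [Pattern.rePred_exists_mem_encode_eq_iff] at hF ⊢
  rw [image_toRaw_dyadicLift]
  have hbad := (((Set.toFinite {f : U 2 → A × A | ¬ IsDyadicTile f}).image (Sigma.mk 1)).image
    Pattern.toRaw).primrecPred_mem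
  exact hbad.computablePred.rePred_or
    (primrecPred_isRawPattern.computablePred.rePred_and (hF.comp primrec_rawFst.to_comp))

/-- The dyadic encoding of an effective set of colourings is effective. -/
theorem dyadicImage_isEffective {A : Type} [Fintype A] [DecidableEq A] [Encodable A]
    [Nonempty A] (S : Set ((ℤ × ℤ) → A)) (hS : IsEffective S) :
    IsEffective (DyadicImage S) :=
  dyadicImage_isEffective_general S hS
end
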